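/- arXiv:1803.06232 — 4 statements merged into one kernel-verified Lean document; each statement's English description precedes it below -/
import Mathlib

section
/- Let d ≥ 1, 0 < m < 1, and k > d(1-m)/m. For every χ > 0 there exists a constant C = C(χ,m,k,d) ∈ ℝ such that for every probability density ρ on ℝ^d, (1/(m-1)) ∫_{ℝ^d} ρ(x)^m dx + χ ∫_{ℝ^d} |x|^k ρ(x) dx ≥ C. In particular the functional ρ ↦ E_m[ρ] + χ J_k[ρ] is bounded below on probability densities. -/
open MeasureTheory Real

/-! Weighted AM–GM with weight `w x = 1 + ‖x‖ ^ k` gives, for every `c > 0`, the pointwise bound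
`ρ ^ m ≤ m c w ρ + (1 - m) c ^ (-s) w ^ (-s)` with `s = m / (1 - m)`. The last term is integrable
because `k s > d`, which is exactly the hypothesis `k > d (1 - m) / m`, while the first
integrates to `m c (1 + J_k[ρ])`. Choosing `m c = χ (1 - m)` makes the moment term cancel against `χ J_k[ρ]`. -/

namespace Real

theorem rpow_le_mul_add_rpow_neg {m a b : ℝ} (hm0 : 0 < m) (hm1 : m < 1) (ha : 0 ≤ a)
    (hb : 0 < b) : a ^ m ≤ m * (b * a) + (1 - m) * b ^ (-(m / (1 - m))) := by
  have hb_pow : (b ^ (-(m / (1 - m)))) ^ (1 - m) = b ^ (-m) := by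
    rw [← rpow_mul hb.le]
    congr 1
    field_simp [(sub_pos.2 hm1).ne']
  calc a ^ m = (b * a) ^ m * (b ^ (-(m / (1 - m)))) ^ (1 - m) := by
        rw [hb_pow, mul_rpow hb.le ha, mul_right_comm, ← rpow_add hb, add_neg_cancel, rpow_zero,
          one_mul]
    _ ≤ m * (b * a) + (1 - m) * b ^ (-(m / (1 - m))) :=
        geom_mean_le_arith_mean2_weighted hm0.le (by linarith) (by positivity) (by positivity)
          (by ring)

theorem add_rpow_le_two_rpow_mul_rpow_add_rpow {a b p : ℝ} (ha : 0 ≤ a) (hb : 0 ≤ b)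
    (hp : 0 ≤ p) : (a + b) ^ p ≤ 2 ^ p * (a ^ p + b ^ p) :=
  calc (a + b) ^ p ≤ (2 * max a b) ^ p := by
        gcongr
        rw [two_mul]
        exact add_le_add (le_max_left a b) (le_max_right a b)
    _ = 2 ^ p * max a b ^ p := mul_rpow zero_le_two (ha.trans (le_max_left a b))
    _ ≤ 2 ^ p * (a ^ p + b ^ p) := by
        gcongr
        rcases max_choice a b with h | h <;> rw [h] <;>
          linarith [rpow_nonneg ha p, rpow_nonneg hb p]

end Real

section JapaneseBracket

variable {E : Type*} [NormedAddCommGroup E] [NormedSpace ℝ E] [FiniteDimensional ℝ E]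
  [MeasurableSpace E] [BorelSpace E] {μ : Measure E} [μ.IsAddHaarMeasure]

theorem integrable_one_add_norm_rpow_rpow_neg {k s : ℝ} (hk : 0 ≤ k) (hs : 0 ≤ s)
    (hks : (Module.finrank ℝ E : ℝ) < k * s) :
    Integrable (fun x : E ↦ (1 + ‖x‖ ^ k) ^ (-s)) μ := by
  refine ((integrable_one_add_norm hks).const_mul (2 ^ (k * s))).mono'
    (Measurable.aestronglyMeasurable (by fun_prop)) (ae_of_all _ fun x ↦ ?_)
  have hbracket : (1 + ‖x‖) ^ (k * s) ≤ 2 ^ (k * s) * (1 + ‖x‖ ^ k) ^ s := by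
    rw [rpow_mul (by positivity), rpow_mul zero_le_two, ← mul_rpow (by positivity) (by positivity)]
    gcongr
    simpa using add_rpow_le_two_rpow_mul_rpow_add_rpow zero_le_one (norm_nonneg x) hk
  rw [norm_of_nonneg (by positivity), rpow_neg (by positivity), rpow_neg (by positivity),
    ← div_eq_mul_inv, inv_le_comm₀ (by positivity) (by positivity), inv_div,
    div_le_iff₀ (by positivity)]
  linarith

end JapaneseBracket

theorem integral_rpow_le_of_weight {α : Type*} [MeasurableSpace α] {μ : Measure α}
    {m c : ℝ} {f w : α → ℝ} (hm0 : 0 < m) (hm1 : m < 1) (hc : 0 < c) (hf : ∀ x, 0 ≤ f x)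
    (hw : ∀ x, 0 < w x) (hwf : Integrable (fun x ↦ w x * f x) μ)
    (hw_neg : Integrable (fun x ↦ w x ^ (-(m / (1 - m)))) μ) :
    ∫ x, f x ^ m ∂μ ≤ m * c * ∫ x, w x * f x ∂μ
      + (1 - m) * c ^ (-(m / (1 - m))) * ∫ x, w x ^ (-(m / (1 - m))) ∂μ := by
  have hpointwise : ∀ x, f x ^ m ≤
      m * c * (w x * f x) + (1 - m) * c ^ (-(m / (1 - m))) * w x ^ (-(m / (1 - m))) := by
    intro x
    calc f x ^ m ≤ m * (c * w x * f x) + (1 - m) * (c * w x) ^ (-(m / (1 - m))) :=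
          rpow_le_mul_add_rpow_neg hm0 hm1 (hf x) (mul_pos hc (hw x))
      _ = _ := by rw [mul_rpow hc.le (hw x).le]; ring
  rw [← integral_const_mul, ← integral_const_mul, ← integral_add (hwf.const_mul _)
    (hw_neg.const_mul _)]
  exact integral_mono_of_nonneg (ae_of_all _ fun x ↦ rpow_nonneg (hf x) m)
    ((hwf.const_mul _).add (hw_neg.const_mul _)) (ae_of_all _ hpointwise)

theorem entropy_plus_moment_bounded_below_general (d : ℕ) (m k : ℝ)
    (hm0 : 0 < m) (hm1 : m < 1) (hk : (d:ℝ) * (1 - m) / m < k)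
    (χ : ℝ) (hχ : 0 < χ) :
    ∃ C : ℝ, ∀ ρ : EuclideanSpace ℝ (Fin d) → ℝ,
      (∀ x, 0 ≤ ρ x) → Integrable ρ → (∫ x, ρ x) = 1 →
      Integrable (fun x => ‖x‖ ^ k * ρ x) →
      C ≤ (1 / (m - 1)) * (∫ x, ρ x ^ m) + χ * (∫ x, ‖x‖ ^ k * ρ x) := by
  have h1m : 0 < 1 - m := sub_pos.2 hm1
  have hdks : (d : ℝ) < k * (m / (1 - m)) := by
    rw [div_lt_iff₀ hm0] at hk
    rw [mul_div_assoc', lt_div_iff₀ h1m]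
    linarith
  have hk0 : 0 ≤ k := (by positivity : (0 : ℝ) ≤ d * (1 - m) / m).trans hk.le
  obtain ⟨c, hc, hmc⟩ : ∃ c, 0 < c ∧ m * c = χ * (1 - m) :=
    ⟨χ * (1 - m) / m, by positivity, by field_simp⟩
  refine ⟨-χ - c ^ (-(m / (1 - m))) *
      ∫ x : EuclideanSpace ℝ (Fin d), (1 + ‖x‖ ^ k) ^ (-(m / (1 - m))),
    fun ρ hρ hρ_int hρ_mass hρ_moment ↦ ?_⟩
  have hweighted : Integrable (fun x ↦ (1 + ‖x‖ ^ k) * ρ x) :=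
    (hρ_int.add hρ_moment).congr (ae_of_all _ fun x ↦ by simp only [Pi.add_apply]; ring)
  have hweighted_eq : ∫ x, (1 + ‖x‖ ^ k) * ρ x = 1 + ∫ x, ‖x‖ ^ k * ρ x := by
    simp only [add_mul, one_mul]
    rw [integral_add hρ_int hρ_moment, hρ_mass]
  have hpower := integral_rpow_le_of_weight hm0 hm1 hc hρ (fun x ↦ by positivity) hweighted
    (integrable_one_add_norm_rpow_rpow_neg hk0 (by positivity) (by simpa using hdks))
  rw [hweighted_eq, hmc] at hpower
  have hentropy : (1 - m)⁻¹ * ∫ x, ρ x ^ m ≤ χ * (1 + ∫ x, ‖x‖ ^ k * ρ x) + c ^ (-(m / (1 - m))) *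
      ∫ x : EuclideanSpace ℝ (Fin d), (1 + ‖x‖ ^ k) ^ (-(m / (1 - m))) := by
    rw [inv_mul_le_iff₀ h1m]
    exact hpower.trans_eq (by ring)
  rw [one_div, show m - 1 = -(1 - m) by ring, inv_neg]
  linarith

theorem entropy_plus_moment_bounded_below (d : ℕ) (hd : 1 ≤ d) (m k : ℝ)
    (hm0 : 0 < m) (hm1 : m < 1) (hk : (d:ℝ) * (1 - m) / m < k)
    (χ : ℝ) (hχ : 0 < χ) :
    ∃ C : ℝ, ∀ ρ : EuclideanSpace ℝ (Fin d) → ℝ,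
      (∀ x, 0 ≤ ρ x) → Integrable ρ → (∫ x, ρ x) = 1 →
      Integrable (fun x => ‖x‖ ^ k * ρ x) →
      C ≤ (1 / (m - 1)) * (∫ x, ρ x ^ m) + χ * (∫ x, ‖x‖ ^ k * ρ x) :=
  entropy_plus_moment_bounded_below_general d m k hm0 hm1 hk χ hχ
end

section
/- Let k > 0. For every radially symmetric non-increasing probability density ρ on ℝ^d, ∫_{ℝ^d} |x|^k ρ(x) dx ≤ ∬_{ℝ^d×ℝ^d} |x-y|^k ρ(x)ρ(y) dx dy ≤ 2·max{1, 2^{k-1}} ∫_{ℝ^d} |x|^k ρ(x) dx. -/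
open MeasureTheory Metric
open scoped ENNReal NNReal

/-!
Let `ν = ρ dx`, a probability measure; the interaction energy is `∬ |x - y|^k dν dν` and the
moment is `∫ |y|^k dν`. Since `ρ = φ(|·|)` with `φ` non-increasing, `ν(B(x, r)) ≤ ν(B(0, r))`
for all `x`: the lunes `B(x, r) \ B(0, r)` and `B(0, r) \ B(x, r)` have equal volume, and
`ρ ≤ φ(r)` on the first while `ρ ≥ φ(r)` on the second. Hence `ν{|y|^k > t} ≤ ν{|x - y|^k > t}`,
and by the layer-cake formula `∫ |y|^k dν ≤ ∫ |x - y|^k dν(y)` for every `x`; integrating in `x`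
gives the lower bound. The upper bound integrates
`|x - y|^k ≤ max(1, 2^(k-1)) (|x|^k + |y|^k)`.
-/

theorem Real.rpow_add_le_max_one_mul_rpow_add_rpow {p a b : ℝ} (ha : 0 ≤ a) (hb : 0 ≤ b)
    (hp : 0 ≤ p) : (a + b) ^ p ≤ max 1 (2 ^ (p - 1)) * (a ^ p + b ^ p) := by
  have hsum : 0 ≤ a ^ p + b ^ p := by positivity
  rcases le_total p 1 with hp1 | hp1
  · calc (a + b) ^ p ≤ a ^ p + b ^ p := Real.rpow_add_le_add_rpow ha hb hp hp1
      _ ≤ _ := le_mul_of_one_le_left hsum (le_max_left _ _)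
  · lift a to ℝ≥0 using ha
    lift b to ℝ≥0 using hb
    calc ((a : ℝ) + b) ^ p ≤ 2 ^ (p - 1) * (a ^ p + b ^ p) := by
          exact_mod_cast NNReal.rpow_add_le_mul_rpow_add_rpow a b hp1
      _ ≤ _ := mul_le_mul_of_nonneg_right (le_max_right _ _) hsum

theorem norm_sub_rpow_le {E : Type*} [SeminormedAddGroup E] (x y : E) {p : ℝ} (hp : 0 ≤ p) :
    ‖x - y‖ ^ p ≤ max 1 (2 ^ (p - 1)) * (‖x‖ ^ p + ‖y‖ ^ p) :=
  (Real.rpow_le_rpow (norm_nonneg _) (norm_sub_le x y) hp).trans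
    (Real.rpow_add_le_max_one_mul_rpow_add_rpow (norm_nonneg x) (norm_nonneg y) hp)

theorem setOf_lt_norm_sub_rpow_eq_compl_closedBall {E : Type*} [SeminormedAddCommGroup E]
    (x : E) {p t : ℝ} (hp : 0 < p) (ht : 0 ≤ t) :
    {y : E | t < ‖x - y‖ ^ p} = (closedBall x (t ^ p⁻¹))ᶜ := by
  ext y
  rw [Set.mem_ofPred_eq, Set.mem_compl_iff, mem_closedBall, not_le, dist_comm, dist_eq_norm]
  exact (Real.rpow_inv_lt_iff_of_pos ht (norm_nonneg _) hp).symm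

section

variable {α : Type*} [MeasurableSpace α] {μ : Measure α} {ρ : α → ℝ}

theorem lintegral_withDensity_ofReal (hρm : Measurable ρ) (hρ : ∀ x, 0 ≤ ρ x) (g : α → ℝ) :
    ∫⁻ x, ENNReal.ofReal (g x) ∂μ.withDensity (fun x => ENNReal.ofReal (ρ x)) =
      ∫⁻ x, ENNReal.ofReal (g x * ρ x) ∂μ := by
  rw [lintegral_withDensity_eq_lintegral_mul_non_measurable _ hρm.ennreal_ofReal
    (ae_of_all _ fun _ => ENNReal.ofReal_lt_top)]
  refine lintegral_congr fun x => ?_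
  rw [ENNReal.ofReal_mul' (hρ x), mul_comm]
  rfl

theorem lintegral_lintegral_withDensity_ofReal (hρm : Measurable ρ) (hρ : ∀ x, 0 ≤ ρ x)
    (f : α → α → ℝ) :
    ∫⁻ x, ∫⁻ y, ENNReal.ofReal (f x y) ∂μ.withDensity (fun x => ENNReal.ofReal (ρ x))
        ∂μ.withDensity (fun x => ENNReal.ofReal (ρ x)) =
      ∫⁻ x, ∫⁻ y, ENNReal.ofReal (f x y * ρ x * ρ y) ∂μ ∂μ := by
  rw [lintegral_withDensity_eq_lintegral_mul_non_measurable _ hρm.ennreal_ofReal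
    (ae_of_all _ fun _ => ENNReal.ofReal_lt_top)]
  refine lintegral_congr fun x => ?_
  rw [Pi.mul_apply, lintegral_withDensity_ofReal hρm hρ,
    ← lintegral_const_mul' _ _ ENNReal.ofReal_ne_top]
  refine lintegral_congr fun y => ?_
  simp only [ENNReal.ofReal_mul', hρ]
  ring

end

section

variable {E : Type*} [NormedAddCommGroup E] [MeasurableSpace E] [BorelSpace E]

theorem withDensity_radial_closedBall_le_closedBall_zero [ProperSpace E] (μ : Measure E)
    [μ.IsAddHaarMeasure] {φ : ℝ → ℝ≥0∞} (hφ : Antitone φ) (x : E) (r : ℝ) :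
    μ.withDensity (fun y => φ ‖y‖) (closedBall x r) ≤
      μ.withDensity (fun y => φ ‖y‖) (closedBall 0 r) := by
  set ν := μ.withDensity (fun y => φ ‖y‖)
  have hx : MeasurableSet (closedBall x r) := measurableSet_closedBall
  have h0 : MeasurableSet (closedBall (0 : E) r) := measurableSet_closedBall
  have hvol : μ (closedBall x r \ closedBall 0 r) = μ (closedBall 0 r \ closedBall x r) :=
    measure_sdiff_symm hx.nullMeasurableSet h0.nullMeasurableSet
      (μ.addHaar_closedBall_center x r)
      ((measure_mono Set.inter_subset_right).trans_lt measure_closedBall_lt_top).ne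
  have hdiff : ν (closedBall x r \ closedBall 0 r) ≤ ν (closedBall 0 r \ closedBall x r) := by
    rw [withDensity_apply _ (hx.diff h0), withDensity_apply _ (h0.diff hx)]
    calc ∫⁻ y in closedBall x r \ closedBall 0 r, φ ‖y‖ ∂μ
        ≤ ∫⁻ _ in closedBall x r \ closedBall 0 r, φ r ∂μ :=
          setLIntegral_mono measurable_const fun y hy =>
            hφ (le_of_lt (by simpa using hy.2))
      _ = ∫⁻ _ in closedBall 0 r \ closedBall x r, φ r ∂μ := by
          rw [setLIntegral_const, setLIntegral_const, hvol]
      _ ≤ ∫⁻ y in closedBall 0 r \ closedBall x r, φ ‖y‖ ∂μ :=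
          setLIntegral_mono' (h0.diff hx) fun y hy => hφ (by simpa using hy.1)
  calc ν (closedBall x r)
      = ν (closedBall x r ∩ closedBall 0 r) + ν (closedBall x r \ closedBall 0 r) :=
        (measure_inter_add_sdiff _ h0).symm
    _ ≤ ν (closedBall 0 r ∩ closedBall x r) + ν (closedBall 0 r \ closedBall x r) := by
        rw [Set.inter_comm]; gcongr
    _ = ν (closedBall 0 r) := measure_inter_add_sdiff _ hx

end

section

variable {E : Type*} [SeminormedAddCommGroup E] [MeasurableSpace E] [OpensMeasurableSpace E]
  {ν : Measure E} {p : ℝ}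

theorem lintegral_rpow_norm_le_lintegral_rpow_norm_sub [IsFiniteMeasure ν] (hp : 0 < p) (x : E)
    (hball : ∀ r, ν (closedBall x r) ≤ ν (closedBall 0 r)) :
    ∫⁻ y, ENNReal.ofReal (‖y‖ ^ p) ∂ν ≤ ∫⁻ y, ENNReal.ofReal (‖x - y‖ ^ p) ∂ν := by
  have hmeas : ∀ z : E, Measurable fun y : E => ‖z - y‖ ^ p := fun z =>
    ((continuous_const.sub continuous_id).norm.rpow_const fun _ => Or.inr hp.le).measurable
  have hzero : ∫⁻ y, ENNReal.ofReal (‖y‖ ^ p) ∂ν = ∫⁻ y, ENNReal.ofReal (‖0 - y‖ ^ p) ∂ν := by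
    simp only [zero_sub, norm_neg]
  rw [hzero, lintegral_eq_lintegral_meas_lt ν (ae_of_all _ fun _ => by positivity)
      (hmeas 0).aemeasurable,
    lintegral_eq_lintegral_meas_lt ν (ae_of_all _ fun _ => by positivity) (hmeas x).aemeasurable]
  refine setLIntegral_mono' measurableSet_Ioi fun t ht => ?_
  rw [setOf_lt_norm_sub_rpow_eq_compl_closedBall x hp ht.le,
    setOf_lt_norm_sub_rpow_eq_compl_closedBall 0 hp ht.le,
    measure_compl measurableSet_closedBall (measure_ne_top ν _),
    measure_compl measurableSet_closedBall (measure_ne_top ν _)]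
  exact tsub_le_tsub_left (hball _) _

theorem lintegral_lintegral_rpow_norm_sub_le [IsProbabilityMeasure ν] (hp : 0 ≤ p) :
    ∫⁻ x, ∫⁻ y, ENNReal.ofReal (‖x - y‖ ^ p) ∂ν ∂ν ≤
      ENNReal.ofReal (2 * max 1 (2 ^ (p - 1))) * ∫⁻ x, ENNReal.ofReal (‖x‖ ^ p) ∂ν := by
  set C := max 1 ((2 : ℝ) ^ (p - 1))
  set m : E → ℝ≥0∞ := fun x => ENNReal.ofReal (‖x‖ ^ p)
  have hm : Measurable m := by fun_prop
  have hC : 0 ≤ C := zero_le_one.trans (le_max_left _ _)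
  calc ∫⁻ x, ∫⁻ y, ENNReal.ofReal (‖x - y‖ ^ p) ∂ν ∂ν
      ≤ ∫⁻ x, ∫⁻ y, ENNReal.ofReal C * (m x + m y) ∂ν ∂ν := by
        gcongr with x y
        rw [← ENNReal.ofReal_add (by positivity) (by positivity), ← ENNReal.ofReal_mul hC]
        exact ENNReal.ofReal_le_ofReal (norm_sub_rpow_le x y hp)
    _ = ENNReal.ofReal C * (∫⁻ x, m x ∂ν + ∫⁻ x, m x ∂ν) := by
        have hinner : ∀ x, ∫⁻ y, ENNReal.ofReal C * (m x + m y) ∂ν =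
            ENNReal.ofReal C * (m x + ∫⁻ y, m y ∂ν) := fun x => by
          rw [lintegral_const_mul' _ _ ENNReal.ofReal_ne_top, lintegral_add_left measurable_const,
            lintegral_const, measure_univ, mul_one]
        rw [lintegral_congr hinner, lintegral_const_mul' _ _ ENNReal.ofReal_ne_top,
          lintegral_add_right _ measurable_const, lintegral_const, measure_univ, mul_one]
    _ = ENNReal.ofReal (2 * C) * ∫⁻ x, m x ∂ν := by
        rw [ENNReal.ofReal_mul zero_le_two, ENNReal.ofReal_ofNat]
        ring

end

theorem interaction_moment_bounds_radial_general (d : ℕ) (k : ℝ) (hk : 0 < k)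
    (ρ : EuclideanSpace ℝ (Fin d) → ℝ) (hρ : ∀ x, 0 ≤ ρ x)
    (hmeas : Measurable ρ) (hint : Integrable ρ) (hmass : (∫ x, ρ x) = 1)
    (hrad : ∃ φ : ℝ → ℝ, Antitone φ ∧ ∀ x, ρ x = φ ‖x‖) :
    (∫⁻ x, ENNReal.ofReal (‖x‖ ^ k * ρ x))
      ≤ (∫⁻ x, ∫⁻ y, ENNReal.ofReal (‖x - y‖ ^ k * ρ x * ρ y)) ∧
    (∫⁻ x, ∫⁻ y, ENNReal.ofReal (‖x - y‖ ^ k * ρ x * ρ y))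
      ≤ ENNReal.ofReal (2 * max 1 ((2:ℝ) ^ (k - 1))) *
        ∫⁻ x, ENNReal.ofReal (‖x‖ ^ k * ρ x) := by
  obtain ⟨φ, hφ, hρφ⟩ := hrad
  set ν := volume.withDensity fun x => ENNReal.ofReal (ρ x)
  have : IsProbabilityMeasure ν := ⟨by
    rw [withDensity_apply _ MeasurableSet.univ, Measure.restrict_univ,
      ← ofReal_integral_eq_lintegral_ofReal hint (ae_of_all _ hρ), hmass, ENNReal.ofReal_one]⟩
  have hball (x : EuclideanSpace ℝ (Fin d)) (r : ℝ) :
      ν (closedBall x r) ≤ ν (closedBall 0 r) := by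
    simp only [ν, hρφ]
    exact withDensity_radial_closedBall_le_closedBall_zero volume
      (ENNReal.ofReal_mono.comp_antitone hφ) x r
  rw [← lintegral_withDensity_ofReal hmeas hρ (fun x => ‖x‖ ^ k),
    ← lintegral_lintegral_withDensity_ofReal hmeas hρ (fun x y => ‖x - y‖ ^ k)]
  refine ⟨?_, lintegral_lintegral_rpow_norm_sub_le hk.le⟩
  calc ∫⁻ y, ENNReal.ofReal (‖y‖ ^ k) ∂ν = ∫⁻ _, ∫⁻ y, ENNReal.ofReal (‖y‖ ^ k) ∂ν ∂ν := by
        rw [lintegral_const, measure_univ, mul_one]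
    _ ≤ _ := lintegral_mono fun x => lintegral_rpow_norm_le_lintegral_rpow_norm_sub hk x (hball x)

theorem interaction_moment_bounds_radial (d : ℕ) (hd : 1 ≤ d) (k : ℝ) (hk : 0 < k)
    (ρ : EuclideanSpace ℝ (Fin d) → ℝ) (hρ : ∀ x, 0 ≤ ρ x)
    (hmeas : Measurable ρ) (hint : Integrable ρ) (hmass : (∫ x, ρ x) = 1)
    (hrad : ∃ φ : ℝ → ℝ, Antitone φ ∧ ∀ x, ρ x = φ ‖x‖) :
    (∫⁻ x, ENNReal.ofReal (‖x‖ ^ k * ρ x))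
      ≤ (∫⁻ x, ∫⁻ y, ENNReal.ofReal (‖x - y‖ ^ k * ρ x * ρ y)) ∧
    (∫⁻ x, ∫⁻ y, ENNReal.ofReal (‖x - y‖ ^ k * ρ x * ρ y))
      ≤ ENNReal.ofReal (2 * max 1 ((2:ℝ) ^ (k - 1))) *
        ∫⁻ x, ENNReal.ofReal (‖x‖ ^ k * ρ x) :=
  interaction_moment_bounds_radial_general d k hk ρ hρ hmeas hint hmass hrad
end

section
/- Let 1 < k < 2 and x, y ∈ ℝ^d with x ≠ 0. Define h(t) := |t x - y|^k. Then h(1) - h(0) ≤ -k (x·y) |y|^{k-2} + (2k/(k-1)) |x|^k, where the first term is interpreted as 0 when y = 0. -/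
open Real

/-!
For `y ≠ 0` write `‖x - y‖ ^ k = (‖x - y‖ ^ 2) ^ (k / 2)` and bound the concave function
`u ↦ u ^ (k / 2)` by its tangent at `u = ‖y‖ ^ 2`. Since `‖x - y‖ ^ 2 - ‖y‖ ^ 2 = ‖x‖ ^ 2 - 2⟪x, y⟫`,
this produces the linear term exactly, plus `(k / 2) ‖y‖ ^ (k - 2) ‖x‖ ^ 2`, which is at most
`2k ‖x‖ ^ k` as long as `‖x‖ ≤ 4 ‖y‖`. When `4 ‖y‖ ≤ ‖x‖` (in particular when `y = 0`) each term is
crudely bounded by a multiple of `‖x‖ ^ k`, and `25 / 16 + k ≤ 2k / (k - 1)` on `1 < k < 2`.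
-/

theorem rpow_le_add_mul_sub {p u a : ℝ} (hp0 : 0 ≤ p) (hp1 : p ≤ 1) (hu : 0 ≤ u) (ha : 0 < a) :
    u ^ p ≤ a ^ p + p * a ^ (p - 1) * (u - a) := by
  -- weighted AM-GM, divided by `a ^ (1 - p)`
  have hamgm : u ^ p * a ^ (1 - p) ≤ p * u + (1 - p) * a :=
    geom_mean_le_arith_mean2_weighted hp0 (sub_nonneg.2 hp1) hu ha.le (add_sub_cancel p 1)
  have hsplit : a ^ p = a ^ (p - 1) * a := by rw [rpow_sub_one ha.ne', div_mul_cancel₀ _ ha.ne']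
  have hinv : a ^ (p - 1) * a ^ (1 - p) = 1 := by
    rw [← rpow_add ha, sub_add_sub_cancel', sub_self, rpow_zero]
  calc u ^ p = u ^ p * a ^ (1 - p) * a ^ (p - 1) := by
        rw [mul_assoc, mul_comm (a ^ (1 - p)), hinv, mul_one]
    _ ≤ (p * u + (1 - p) * a) * a ^ (p - 1) := by gcongr
    _ = a ^ p + p * a ^ (p - 1) * (u - a) := by rw [hsplit]; ring

theorem norm_sub_rpow_le_of_four_mul_le {E : Type*} [SeminormedAddCommGroup E] {k : ℝ}
    (hk0 : 0 ≤ k) (hk2 : k ≤ 2) {x y : E} (hyx : 4 * ‖y‖ ≤ ‖x‖) :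
    ‖x - y‖ ^ k ≤ 25 / 16 * ‖x‖ ^ k := by
  calc ‖x - y‖ ^ k ≤ (5 / 4 * ‖x‖) ^ k := by
        gcongr; linarith [norm_sub_le x y]
    _ = (5 / 4) ^ k * ‖x‖ ^ k := mul_rpow (by norm_num) (norm_nonneg x)
    _ ≤ (5 / 4) ^ (2 : ℝ) * ‖x‖ ^ k := by
        gcongr
        norm_num
    _ = 25 / 16 * ‖x‖ ^ k := by norm_num

section InnerProductSpace

variable {E : Type*} [NormedAddCommGroup E] [InnerProductSpace ℝ E]

theorem norm_sub_rpow_le_of_le_two {k : ℝ} (hk0 : 0 ≤ k) (hk2 : k ≤ 2) (x : E) {y : E} (hy : y ≠ 0) :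
    ‖x - y‖ ^ k ≤
      ‖y‖ ^ k - k * inner ℝ x y * ‖y‖ ^ (k - 2) + k / 2 * ‖y‖ ^ (k - 2) * ‖x‖ ^ 2 := by
  have hsq (r : ℝ) (hr : 0 ≤ r) (s : ℝ) : (r ^ 2) ^ s = r ^ (2 * s) := by
    rw [← rpow_natCast_mul hr]; norm_num
  have htan := rpow_le_add_mul_sub (u := ‖x - y‖ ^ 2) (a := ‖y‖ ^ 2) (p := k / 2)
    (by linarith) (by linarith) (by positivity) (by positivity)
  rw [hsq _ (norm_nonneg _), hsq _ (norm_nonneg _), hsq _ (norm_nonneg _), norm_sub_sq_real,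
    mul_div_cancel₀ _ two_ne_zero, show 2 * (k / 2 - 1) = k - 2 by ring] at htan
  linear_combination htan

theorem inner_mul_rpow_sub_two_le {k : ℝ} (hk : 1 < k) {x y : E} (hyx : ‖y‖ ≤ ‖x‖) :
    inner ℝ x y * ‖y‖ ^ (k - 2) ≤ ‖x‖ ^ k := by
  rcases eq_or_ne y 0 with rfl | hy
  · simp [rpow_nonneg]
  have hy' : 0 < ‖y‖ := norm_pos_iff.2 hy
  calc inner ℝ x y * ‖y‖ ^ (k - 2) ≤ ‖x‖ * ‖y‖ * ‖y‖ ^ (k - 2) := by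
        gcongr; exact real_inner_le_norm x y
    _ = ‖x‖ * ‖y‖ ^ (k - 1) := by
        rw [mul_assoc, mul_comm ‖y‖, ← rpow_add_one hy'.ne']; ring_nf
    _ ≤ ‖x‖ * ‖x‖ ^ (k - 1) := by gcongr
    _ = ‖x‖ ^ k := by
        rw [← rpow_one_add' (norm_nonneg x) (by linarith)]; ring_nf

end InnerProductSpace

theorem rpow_sub_two_mul_sq_le {k a b : ℝ} (hk1 : 1 ≤ k) (hk2 : k ≤ 2) (ha : 0 < a) (hb : 0 ≤ b)
    (hba : b ≤ 4 * a) : a ^ (k - 2) * b ^ 2 ≤ 4 * b ^ k := by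
  have hratio : (b / a) ^ (2 - k) ≤ 4 := calc
    (b / a) ^ (2 - k) ≤ 4 ^ (2 - k) := by
      gcongr; rwa [div_le_iff₀ ha]
    _ ≤ 4 ^ (1 : ℝ) := rpow_le_rpow_of_exponent_le (by norm_num) (by linarith)
    _ = 4 := rpow_one 4
  calc a ^ (k - 2) * b ^ 2 = a ^ (k - 2) * (b ^ (2 - k) * b ^ k) := by
        rw [← rpow_add' hb (by norm_num), sub_add_cancel, rpow_two]
    _ = (b / a) ^ (2 - k) * b ^ k := by
        rw [div_rpow hb ha.le, show k - 2 = -(2 - k) by ring, rpow_neg ha.le]; ring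
    _ ≤ 4 * b ^ k := by gcongr

theorem taylor_bound_k_between_one_two_general (d : ℕ) (k : ℝ) (hk1 : 1 < k) (hk2 : k < 2)
    (x y : EuclideanSpace ℝ (Fin d)) :
    ‖x - y‖ ^ k - ‖y‖ ^ k
      ≤ -k * (inner ℝ x y : ℝ) * ‖y‖ ^ (k - 2) + (2 * k / (k - 1)) * ‖x‖ ^ k := by
  have hxk : 0 ≤ ‖x‖ ^ k := rpow_nonneg (norm_nonneg x) k
  rcases le_or_gt (4 * ‖y‖) ‖x‖ with hlarge | hsmall
  · have hsub := norm_sub_rpow_le_of_four_mul_le (by linarith) hk2.le hlarge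
    have hinner := inner_mul_rpow_sub_two_le hk1 (x := x) (y := y) (by linarith [norm_nonneg y])
    have hconst : 25 / 16 + k ≤ 2 * k / (k - 1) := by
      rw [le_div_iff₀ (by linarith)]; nlinarith
    linarith [rpow_nonneg (norm_nonneg y) k, mul_le_mul_of_nonneg_left hinner (by linarith : 0 ≤ k),
      mul_le_mul_of_nonneg_right hconst hxk]
  · have hy : 0 < ‖y‖ := by linarith [norm_nonneg x]
    have htan := norm_sub_rpow_le_of_le_two (by linarith) hk2.le x (norm_pos_iff.1 hy)
    have hquad := rpow_sub_two_mul_sq_le hk1.le hk2.le hy (norm_nonneg x) hsmall.le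
    have hconst : 2 * k ≤ 2 * k / (k - 1) := by
      rw [le_div_iff₀ (by linarith)]; nlinarith
    linarith [mul_le_mul_of_nonneg_left hquad (by linarith : 0 ≤ k / 2),
      mul_le_mul_of_nonneg_right hconst hxk]

theorem taylor_bound_k_between_one_two (d : ℕ) (k : ℝ) (hk1 : 1 < k) (hk2 : k < 2)
    (x y : EuclideanSpace ℝ (Fin d)) (hx : x ≠ 0) :
    ‖x - y‖ ^ k - ‖y‖ ^ k
      ≤ -k * (inner ℝ x y : ℝ) * ‖y‖ ^ (k - 2) + (2 * k / (k - 1)) * ‖x‖ ^ k :=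
  taylor_bound_k_between_one_two_general d k hk1 hk2 x y
end

section
/- Let d ≥ 1, 0 < m < 1, 0 < k < d(1-m)/m, and choose any β with k < β < d(1-m)/m. Define the probability density ρ = ∑_{j≥0} (ρ_j / |B_{2^{j+1}} \ B_{2^j}|) · 𝟙_{B_{2^{j+1}} \ B_{2^j}} with ρ_j = 2^{-jβ}/∑_{i≥0} 2^{-iβ}. Then ∫ |x|^k ρ(x) dx < ∞ while ∫ ρ(x)^m dx = +∞; in particular F_{m,k}[ρ] = -∞. -/
/-!
On the dyadic annulus `A j = B_{2^{j+1}} \ B_{2^j}`, whose volume is `|A 0| 2^{jd}`, the density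
`ρ` is the constant `c j / |A j|` with `c j = (1 - 2^{-β}) 2^{-jβ}`. Hence `∫_{A j} |x|^k ρ` is at
most `2^{(j+1)k} c j`, which is summable because `k < β`, while `∫_{A j} ρ^m = c j ^ m |A j| ^ (1-m)`
is a fixed positive multiple of `2^{j(d(1-m) - βm)} ≥ 1`, because `β < d(1-m)/m`.
-/

open MeasureTheory Metric Real Function

open scoped ENNReal

section DisjointFamily

variable {α : Type*} {s : ℕ → Set α}

theorem tsum_mul_indicator_one_of_mem (hs : Pairwise (Disjoint on s)) (f : ℕ → ℝ) {i : ℕ}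
    {x : α} (hx : x ∈ s i) : ∑' j, f j * (s j).indicator 1 x = f i := by
  rw [tsum_eq_single i fun j hj ↦ by
    rw [Set.indicator_of_notMem ((hs hj).notMem_of_mem_right hx), mul_zero]]
  simp [hx]

theorem tsum_mul_indicator_one_of_forall_notMem (f : ℕ → ℝ) {x : α} (hx : ∀ j, x ∉ s j) :
    ∑' j, f j * (s j).indicator 1 x = 0 := by
  simp [Set.indicator_of_notMem, hx]

theorem lintegral_eq_tsum_setLIntegral [MeasurableSpace α] {μ : Measure α}
    (hs_meas : ∀ j, MeasurableSet (s j)) (hs : Pairwise (Disjoint on s)) {g : α → ℝ≥0∞}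
    (hg : ∀ x, (∀ j, x ∉ s j) → g x = 0) :
    ∫⁻ x, g x ∂μ = ∑' j, ∫⁻ x in s j, g x ∂μ := by
  rw [← lintegral_iUnion hs_meas hs, setLIntegral_eq_of_support_subset]
  intro x hx
  by_contra h
  exact hx (hg x (by simpa using h))

end DisjointFamily

theorem ENNReal.ofReal_mul_eq_ofReal_mul_toReal {a : ℝ} (ha : 0 ≤ a) {b : ℝ≥0∞} (hb : b ≠ ∞) :
    ENNReal.ofReal a * b = ENNReal.ofReal (a * b.toReal) := by
  rw [ENNReal.ofReal_mul ha, ENNReal.ofReal_toReal hb]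

theorem rpow_mul_rpow_one_sub_le_mul_pow {a b q r m : ℝ} (ha : 0 ≤ a) (hb : 0 ≤ b)
    (hq : 0 ≤ q) (hr : 0 ≤ r) (hqr : 1 ≤ q ^ m * r ^ (1 - m)) (j : ℕ) :
    a ^ m * b ^ (1 - m) ≤ (a * q ^ j) ^ m * (b * r ^ j) ^ (1 - m) := by
  rw [Real.mul_rpow ha (by positivity), Real.mul_rpow hb (by positivity),
    ← Real.rpow_pow_comm hq, ← Real.rpow_pow_comm hr]
  calc a ^ m * b ^ (1 - m) ≤ a ^ m * b ^ (1 - m) * (q ^ m * r ^ (1 - m)) ^ j :=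
        le_mul_of_one_le_right (by positivity) (one_le_pow₀ hqr)
    _ = _ := by ring

theorem two_rpow_neg_mul_div_tsum {β : ℝ} (hβ : 0 < β) (j : ℕ) :
    (2 : ℝ) ^ (-(j : ℝ) * β) / ∑' i : ℕ, (2 : ℝ) ^ (-(i : ℝ) * β) =
      (1 - 2 ^ (-β)) * (2 ^ (-β)) ^ j := by
  have hgeom (i : ℕ) : (2 : ℝ) ^ (-(i : ℝ) * β) = (2 ^ (-β)) ^ i := by
    rw [neg_mul, ← mul_neg, mul_comm, Real.rpow_mul_natCast zero_le_two]
  simp_rw [hgeom]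
  rw [tsum_geometric_of_lt_one (by positivity)
    (Real.rpow_lt_one_of_one_lt_of_neg one_lt_two (neg_neg_of_pos hβ)), div_inv_eq_mul, mul_comm]

section DyadicAnnulus

variable (E : Type*) [NormedAddCommGroup E]

def dyadicAnnulus (j : ℕ) : Set E := ball 0 (2 ^ (j + 1)) \ ball 0 (2 ^ j)

variable {E}

theorem mem_dyadicAnnulus {j : ℕ} {x : E} :
    x ∈ dyadicAnnulus E j ↔ 2 ^ j ≤ ‖x‖ ∧ ‖x‖ < 2 ^ (j + 1) := by
  simp only [dyadicAnnulus, Set.mem_sdiff, mem_ball_zero_iff, not_lt, and_comm]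

theorem ball_rpow_diff_ball_rpow (j : ℕ) :
    ball (0 : E) ((2 : ℝ) ^ ((j : ℝ) + 1)) \ ball 0 ((2 : ℝ) ^ (j : ℝ)) = dyadicAnnulus E j := by
  simp only [← Nat.cast_succ, Real.rpow_natCast, dyadicAnnulus]

theorem measurableSet_dyadicAnnulus [MeasurableSpace E] [OpensMeasurableSpace E] (j : ℕ) :
    MeasurableSet (dyadicAnnulus E j) :=
  measurableSet_ball.diff measurableSet_ball

theorem pairwise_disjoint_dyadicAnnulus : Pairwise (Disjoint on dyadicAnnulus E) := by
  refine (pairwise_disjoint_on _).2 fun i j hij ↦ Set.disjoint_left.2 fun x hi hj ↦ ?_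
  have : (2 : ℝ) ^ (i + 1) ≤ 2 ^ j := pow_le_pow_right₀ one_le_two hij
  linarith [(mem_dyadicAnnulus.1 hi).2, (mem_dyadicAnnulus.1 hj).1]

theorem measure_dyadicAnnulus_ne_top [ProperSpace E] [MeasurableSpace E] (μ : Measure E)
    [IsFiniteMeasureOnCompacts μ] (j : ℕ) : μ (dyadicAnnulus E j) ≠ ∞ :=
  (measure_mono Set.sdiff_subset).trans_lt measure_ball_lt_top |>.ne

variable [NormedSpace ℝ E] [MeasurableSpace E] [BorelSpace E] [FiniteDimensional ℝ E]
  [Nontrivial E] (μ : Measure E) [μ.IsAddHaarMeasure]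

theorem addHaar_dyadicAnnulus (j : ℕ) :
    μ (dyadicAnnulus E j) = ENNReal.ofReal
      ((2 ^ Module.finrank ℝ E - 1) * (2 ^ Module.finrank ℝ E) ^ j) * μ (ball 0 1) := by
  have hsub : ball (0 : E) (2 ^ j) ⊆ ball 0 (2 ^ (j + 1)) :=
    ball_subset_ball (pow_le_pow_right₀ one_le_two j.le_succ)
  rw [dyadicAnnulus, measure_sdiff hsub measurableSet_ball.nullMeasurableSet
    measure_ball_lt_top.ne, Measure.addHaar_ball μ 0 (r := 2 ^ (j + 1)) (by positivity),
    Measure.addHaar_ball μ 0 (r := 2 ^ j) (by positivity),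
    ← ENNReal.sub_mul fun _ _ ↦ measure_ball_lt_top.ne, ← ENNReal.ofReal_sub _ (by positivity)]
  congr 2
  ring

theorem toReal_addHaar_dyadicAnnulus (j : ℕ) :
    (μ (dyadicAnnulus E j)).toReal =
      (μ (dyadicAnnulus E 0)).toReal * (2 ^ Module.finrank ℝ E) ^ j := by
  have h : 0 ≤ (2 : ℝ) ^ Module.finrank ℝ E - 1 := sub_nonneg.2 (one_le_pow₀ one_le_two)
  rw [addHaar_dyadicAnnulus, addHaar_dyadicAnnulus, ENNReal.toReal_mul, ENNReal.toReal_mul,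
    ENNReal.toReal_ofReal (mul_nonneg h (by positivity)),
    ENNReal.toReal_ofReal (mul_nonneg h (by positivity))]
  ring

theorem toReal_addHaar_dyadicAnnulus_pos (j : ℕ) : 0 < (μ (dyadicAnnulus E j)).toReal := by
  have : 1 < (2 : ℝ) ^ Module.finrank ℝ E := one_lt_pow₀ one_lt_two Module.finrank_pos.ne'
  rw [addHaar_dyadicAnnulus, ENNReal.toReal_mul, ENNReal.toReal_ofReal (by positivity)]
  exact mul_pos (mul_pos (by linarith) (by positivity))
    (ENNReal.toReal_pos (measure_ball_pos μ 0 one_pos).ne' measure_ball_lt_top.ne)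

end DyadicAnnulus

section AnnularDensity

variable {E : Type*} [NormedAddCommGroup E] [MeasurableSpace E]

noncomputable def annularDensity (μ : Measure E) (c : ℕ → ℝ) (x : E) : ℝ :=
  ∑' j, c j / (μ (dyadicAnnulus E j)).toReal * (dyadicAnnulus E j).indicator 1 x

variable {μ : Measure E} {c : ℕ → ℝ}

theorem annularDensity_of_mem {j : ℕ} {x : E} (hx : x ∈ dyadicAnnulus E j) :
    annularDensity μ c x = c j / (μ (dyadicAnnulus E j)).toReal :=
  tsum_mul_indicator_one_of_mem pairwise_disjoint_dyadicAnnulus _ hx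

theorem annularDensity_of_forall_notMem {x : E} (hx : ∀ j, x ∉ dyadicAnnulus E j) :
    annularDensity μ c x = 0 :=
  tsum_mul_indicator_one_of_forall_notMem _ hx

variable [NormedSpace ℝ E] [BorelSpace E] [FiniteDimensional ℝ E] [Nontrivial E]
  [μ.IsAddHaarMeasure]

theorem setLIntegral_norm_rpow_mul_annularDensity_le {k : ℝ} (hk : 0 ≤ k) (hc : ∀ j, 0 ≤ c j)
    (j : ℕ) : ∫⁻ x in dyadicAnnulus E j, ENNReal.ofReal (‖x‖ ^ k * annularDensity μ c x) ∂μ ≤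
      ENNReal.ofReal (2 ^ k * ((2 ^ k) ^ j * c j)) := by
  have hv := toReal_addHaar_dyadicAnnulus_pos μ j
  calc ∫⁻ x in dyadicAnnulus E j, ENNReal.ofReal (‖x‖ ^ k * annularDensity μ c x) ∂μ
      ≤ ∫⁻ _ in dyadicAnnulus E j,
          ENNReal.ofReal ((2 ^ (j + 1)) ^ k * (c j / (μ (dyadicAnnulus E j)).toReal)) ∂μ := by
        refine setLIntegral_mono measurable_const fun x hx ↦ ENNReal.ofReal_le_ofReal ?_
        rw [annularDensity_of_mem hx]
        gcongr
        · exact div_nonneg (hc j) hv.le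
        · exact (mem_dyadicAnnulus.1 hx).2.le
    _ = ENNReal.ofReal (2 ^ k * ((2 ^ k) ^ j * c j)) := by
        rw [setLIntegral_const, ENNReal.ofReal_mul_eq_ofReal_mul_toReal
          (by have := hc j; positivity) (measure_dyadicAnnulus_ne_top μ j),
          ← Real.rpow_pow_comm zero_le_two, pow_succ]
        field_simp

theorem lintegral_norm_rpow_mul_annularDensity_lt_top {k : ℝ} (hk : 0 ≤ k) (hc : ∀ j, 0 ≤ c j)
    (hsum : Summable fun j ↦ (2 ^ k) ^ j * c j) :
    ∫⁻ x, ENNReal.ofReal (‖x‖ ^ k * annularDensity μ c x) ∂μ < ∞ := by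
  rw [lintegral_eq_tsum_setLIntegral measurableSet_dyadicAnnulus pairwise_disjoint_dyadicAnnulus
    fun x hx ↦ by rw [annularDensity_of_forall_notMem hx, mul_zero, ENNReal.ofReal_zero]]
  refine (ENNReal.tsum_le_tsum (setLIntegral_norm_rpow_mul_annularDensity_le hk hc)).trans_lt ?_
  rw [← ENNReal.ofReal_tsum_of_nonneg (fun j ↦ by have := hc j; positivity) (hsum.mul_left _)]
  exact ENNReal.ofReal_lt_top

theorem setLIntegral_annularDensity_rpow (hc : ∀ j, 0 ≤ c j) (m : ℝ) (j : ℕ) :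
    ∫⁻ x in dyadicAnnulus E j, ENNReal.ofReal (annularDensity μ c x ^ m) ∂μ =
      ENNReal.ofReal (c j ^ m * (μ (dyadicAnnulus E j)).toReal ^ (1 - m)) := by
  have hv := toReal_addHaar_dyadicAnnulus_pos μ j
  rw [setLIntegral_congr_fun (measurableSet_dyadicAnnulus j) fun x hx ↦ by
      rw [annularDensity_of_mem hx], setLIntegral_const,
    ENNReal.ofReal_mul_eq_ofReal_mul_toReal (by have := hc j; positivity)
      (measure_dyadicAnnulus_ne_top μ j), Real.div_rpow (hc j) hv.le, Real.rpow_sub hv,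
    Real.rpow_one]
  field_simp

theorem lintegral_annularDensity_rpow_eq_top (hc : ∀ j, 0 ≤ c j) {m ε : ℝ} (hε : 0 < ε)
    (hbound : ∀ j, ε ≤ c j ^ m * (μ (dyadicAnnulus E j)).toReal ^ (1 - m)) :
    ∫⁻ x, ENNReal.ofReal (annularDensity μ c x ^ m) ∂μ = ∞ := by
  refine top_le_iff.1 ?_
  calc ∞ = ∑' _ : ℕ, ENNReal.ofReal ε :=
        (ENNReal.tsum_const_eq_top_of_ne_zero (ENNReal.ofReal_pos.2 hε).ne').symm
    _ ≤ ∑' j, ∫⁻ x in dyadicAnnulus E j, ENNReal.ofReal (annularDensity μ c x ^ m) ∂μ :=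
        ENNReal.tsum_le_tsum fun j ↦ by
          rw [setLIntegral_annularDensity_rpow hc]
          exact ENNReal.ofReal_le_ofReal (hbound j)
    _ = ∫⁻ x in ⋃ j, dyadicAnnulus E j, ENNReal.ofReal (annularDensity μ c x ^ m) ∂μ :=
        (lintegral_iUnion measurableSet_dyadicAnnulus pairwise_disjoint_dyadicAnnulus _).symm
    _ ≤ _ := setLIntegral_le_lintegral _ _

end AnnularDensity

theorem unbounded_below_zone_I_general (d : ℕ) (hd : 1 ≤ d) (m k β : ℝ)
    (hm0 : 0 < m) (hk : 0 < k) (hkβ : k < β)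
    (hβ : β < (d:ℝ) * (1 - m) / m)
    (ρ : EuclideanSpace ℝ (Fin d) → ℝ)
    (hρdef : ∀ x, ρ x = ∑' j : ℕ,
      (((2:ℝ) ^ (-(j:ℝ) * β) / ∑' i : ℕ, (2:ℝ) ^ (-(i:ℝ) * β)) /
        (volume (ball (0:EuclideanSpace ℝ (Fin d)) ((2:ℝ) ^ ((j:ℝ) + 1)) \
          ball 0 ((2:ℝ) ^ (j:ℝ)))).toReal) *
      Set.indicator (ball (0:EuclideanSpace ℝ (Fin d)) ((2:ℝ) ^ ((j:ℝ) + 1)) \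
          ball 0 ((2:ℝ) ^ (j:ℝ))) 1 x) :
    (∫⁻ x, ENNReal.ofReal (‖x‖ ^ k * ρ x)) < ⊤ ∧
    (∫⁻ x, ENNReal.ofReal (ρ x ^ m)) = ⊤ := by
  have : Nontrivial (EuclideanSpace ℝ (Fin d)) :=
    Module.nontrivial_of_finrank_pos (R := ℝ) (by rw [finrank_euclideanSpace_fin]; omega)
  set q : ℝ := 2 ^ (-β)
  have hq0 : 0 < q := by positivity
  have hq1 : q < 1 := Real.rpow_lt_one_of_one_lt_of_neg one_lt_two (by linarith)
  obtain rfl : ρ = annularDensity volume fun j ↦ (1 - q) * q ^ j := funext fun x ↦ by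
    simp only [hρdef, ball_rpow_diff_ball_rpow, two_rpow_neg_mul_div_tsum (hk.trans hkβ)]
    rfl
  have hc (j : ℕ) : 0 ≤ (1 - q) * q ^ j := mul_nonneg (by linarith) (by positivity)
  constructor
  · have hratio : 2 ^ k * q < 1 := by
      rw [← Real.rpow_add two_pos]
      exact Real.rpow_lt_one_of_one_lt_of_neg one_lt_two (by linarith)
    exact lintegral_norm_rpow_mul_annularDensity_lt_top hk.le hc
      (((summable_geometric_of_lt_one (by positivity) hratio).mul_left (1 - q)).congr
        fun j ↦ by ring)
  · have hgrowth : 1 ≤ q ^ m * ((2 : ℝ) ^ d) ^ (1 - m) := by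
      rw [← Real.rpow_mul two_pos.le, ← Real.rpow_natCast, ← Real.rpow_mul two_pos.le,
        ← Real.rpow_add two_pos]
      exact Real.one_le_rpow one_le_two (by nlinarith [(lt_div_iff₀ hm0).1 hβ])
    refine lintegral_annularDensity_rpow_eq_top hc (ε := (1 - q) ^ m *
      (volume (dyadicAnnulus (EuclideanSpace ℝ (Fin d)) 0)).toReal ^ (1 - m)) ?_ fun j ↦ ?_
    · have := toReal_addHaar_dyadicAnnulus_pos (E := EuclideanSpace ℝ (Fin d)) volume 0
      have : 0 < 1 - q := by linarith
      positivity
    · rw [toReal_addHaar_dyadicAnnulus volume j, finrank_euclideanSpace_fin]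
      exact rpow_mul_rpow_one_sub_le_mul_pow (sub_nonneg.2 hq1.le) ENNReal.toReal_nonneg hq0.le
        (by positivity) hgrowth j

theorem unbounded_below_zone_I (d : ℕ) (hd : 1 ≤ d) (m k β : ℝ)
    (hm0 : 0 < m) (hm1 : m < 1) (hk : 0 < k) (hkβ : k < β)
    (hβ : β < (d:ℝ) * (1 - m) / m)
    (ρ : EuclideanSpace ℝ (Fin d) → ℝ)
    (hρdef : ∀ x, ρ x = ∑' j : ℕ,
      (((2:ℝ) ^ (-(j:ℝ) * β) / ∑' i : ℕ, (2:ℝ) ^ (-(i:ℝ) * β)) /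
        (volume (ball (0:EuclideanSpace ℝ (Fin d)) ((2:ℝ) ^ ((j:ℝ) + 1)) \
          ball 0 ((2:ℝ) ^ (j:ℝ)))).toReal) *
      Set.indicator (ball (0:EuclideanSpace ℝ (Fin d)) ((2:ℝ) ^ ((j:ℝ) + 1)) \
          ball 0 ((2:ℝ) ^ (j:ℝ))) 1 x) :
    (∫⁻ x, ENNReal.ofReal (‖x‖ ^ k * ρ x)) < ⊤ ∧
    (∫⁻ x, ENNReal.ofReal (ρ x ^ m)) = ⊤ :=
  unbounded_below_zone_I_general d hd m k β hm0 hk hkβ hβ ρ hρdef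
end
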